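/- For every n ≥ 3, there exists a set R of n - 1 rooted triplets over an n-element label set such that R is incompatible but every proper subset of R is compatible. -/

import Mathlib

open SimpleGraph

universe u

/-- A quartet `xy|zw`: an unordered pair of unordered pairs of labels. -/
def quartet {L : Type u} (x y z w : L) : Sym2 (Sym2 L) := s(s(x, y), s(z, w))

/-- `q` is a genuine quartet: four pairwise distinct labels. -/
def IsQuartet {L : Type u} (q : Sym2 (Sym2 L)) : Prop :=
  ∃ x y z w : L, x ≠ y ∧ x ≠ z ∧ x ≠ w ∧ y ≠ z ∧ y ≠ w ∧ z ≠ w ∧ q = quartet x y z w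

/-- The label set `L(Q)` of a set of quartets. -/
def qLabelSet {L : Type u} (Q : Set (Sym2 (Sym2 L))) : Set L :=
  {x | ∃ q ∈ Q, ∃ p, p ∈ q ∧ x ∈ p}

/-- An unrooted phylogenetic tree whose leaves are in bijection with the label set `S`:
a finite tree with no degree-2 vertex, whose degree-1 vertices are exactly the labeled ones. -/
structure UTree (L : Type u) (S : Set L) where
  V : Type
  fV : Fintype V
  G : SimpleGraph V
  isTree : G.IsTree
  label : S → V
  labelInj : Function.Injective label
  leafIff : ∀ v : V, (∃ l : S, label l = v) ↔ (G.neighborSet v).ncard = 1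
  noDeg2 : ∀ v : V, (G.neighborSet v).ncard ≠ 2

/-- `T` displays the quartet `xy|zw`: the path between the leaves labeled `x` and `y`
is vertex-disjoint from the path between the leaves labeled `z` and `w`. -/
def UTree.displays4 {L : Type u} {S : Set L} (T : UTree L S) (x y z w : L) : Prop :=
  ∃ (hx : x ∈ S) (hy : y ∈ S) (hz : z ∈ S) (hw : w ∈ S)
    (p : T.G.Walk (T.label ⟨x, hx⟩) (T.label ⟨y, hy⟩))
    (p' : T.G.Walk (T.label ⟨z, hz⟩) (T.label ⟨w, hw⟩)),
    p.IsPath ∧ p'.IsPath ∧ ∀ v, v ∈ p.support → v ∉ p'.support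

def UTree.displays {L : Type u} {S : Set L} (T : UTree L S) (q : Sym2 (Sym2 L)) : Prop :=
  ∀ x y z w : L, q = quartet x y z w → T.displays4 x y z w

/-- A set of quartets is compatible over label set `S` if a single tree displays all of them. -/
def QCompat {L : Type u} (S : Set L) (Q : Set (Sym2 (Sym2 L))) : Prop :=
  ∃ T : UTree L S, ∀ q ∈ Q, T.displays q

/-- `χ` is a partition of the label set `S` (a character on `S`). -/
def IsPartitionOn {L : Type u} (S : Set L) (χ : Set (Set L)) : Prop :=
  (∀ B ∈ χ, B.Nonempty ∧ B ⊆ S) ∧ ∀ x ∈ S, ∃! B, B ∈ χ ∧ x ∈ B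

/-- The vertex set of the minimal subtree of `T` spanning the leaves labeled by `B`. -/
def UTree.span {L : Type u} {S : Set L} (T : UTree L S) (B : Set L) : Set T.V :=
  {v | ∃ (x y : L) (hx : x ∈ S) (hy : y ∈ S), x ∈ B ∧ y ∈ B ∧
    ∃ p : T.G.Walk (T.label ⟨x, hx⟩) (T.label ⟨y, hy⟩), p.IsPath ∧ v ∈ p.support}

/-- The character `χ` is convex on `T`: spanning subtrees of distinct blocks are disjoint. -/
def UTree.convexOn {L : Type u} {S : Set L} (T : UTree L S) (χ : Set (Set L)) : Prop :=
  ∀ B ∈ χ, ∀ B' ∈ χ, B ≠ B' → ∀ v ∈ T.span B, v ∉ T.span B'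

/-- A set of characters is compatible over `S` if a single tree makes all of them convex. -/
def CCompat {L : Type u} (S : Set L) (C : Set (Set (Set L))) : Prop :=
  ∃ T : UTree L S, ∀ χ ∈ C, T.convexOn χ

/-- The character `χ_q` corresponding to the quartet `xy|zw`:
blocks `{x,y}`, `{z,w}` and a singleton for every other label of `S`. -/
def chiQ {L : Type u} (S : Set L) (x y z w : L) : Set (Set L) :=
  {{x, y}, {z, w}} ∪ {B | ∃ l ∈ S, l ≠ x ∧ l ≠ y ∧ l ≠ z ∧ l ≠ w ∧ B = {l}}

/-- The set of characters corresponding to a set of quartets. -/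
def CQ {L : Type u} (S : Set L) (Q : Set (Sym2 (Sym2 L))) : Set (Set (Set L)) :=
  {χ | ∃ q ∈ Q, ∃ x y z w : L, q = quartet x y z w ∧ χ = chiQ S x y z w}

/-- A rooted phylogenetic tree on label set `S`. -/
structure RTree (L : Type u) (S : Set L) where
  V : Type
  fV : Fintype V
  G : SimpleGraph V
  isTree : G.IsTree
  root : V
  label : S → V
  labelInj : Function.Injective label
  leafIff : ∀ v : V, (∃ l : S, label l = v) ↔ ((G.neighborSet v).ncard = 1 ∧ v ≠ root)
  noDeg2 : ∀ v : V, v ≠ root → (G.neighborSet v).ncard ≠ 2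

/-- `u` is an ancestor of `v`: `u` lies on the path from the root to `v`. -/
def RTree.anc {L : Type u} {S : Set L} (T : RTree L S) (u v : T.V) : Prop :=
  ∃ p : T.G.Walk T.root v, p.IsPath ∧ u ∈ p.support

/-- `m` is the most recent common ancestor of the set `A` of vertices. -/
def RTree.isMRCA {L : Type u} {S : Set L} (T : RTree L S) (A : Set T.V) (m : T.V) : Prop :=
  (∀ v ∈ A, T.anc m v) ∧ ∀ w, (∀ v ∈ A, T.anc w v) → T.anc w m

/-- `T` displays the rooted triplet `ab|c`: the MRCA of `{a,b}` is a proper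
descendant of the MRCA of `{a,b,c}`. -/
def RTree.displays3 {L : Type u} {S : Set L} (T : RTree L S) (a b c : L) : Prop :=
  ∃ (ha : a ∈ S) (hb : b ∈ S) (hc : c ∈ S) (m M : T.V),
    T.isMRCA {T.label ⟨a, ha⟩, T.label ⟨b, hb⟩} m ∧
    T.isMRCA {T.label ⟨a, ha⟩, T.label ⟨b, hb⟩, T.label ⟨c, hc⟩} M ∧
    T.anc M m ∧ M ≠ m

/-- A rooted triplet `ab|c` is encoded as the pair `(s(a,b), c)`. -/
def RTree.displays {L : Type u} {S : Set L} (T : RTree L S) (t : Sym2 L × L) : Prop :=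
  ∀ a b c : L, t = (s(a, b), c) → T.displays3 a b c

def IsTriplet {L : Type u} (t : Sym2 L × L) : Prop :=
  ∃ a b c : L, a ≠ b ∧ a ≠ c ∧ b ≠ c ∧ t = (s(a, b), c)

/-- The label set `L(R)` of a set of rooted triplets. -/
def tLabelSet {L : Type u} (R : Set (Sym2 L × L)) : Set L :=
  {x | ∃ t ∈ R, x ∈ t.1 ∨ x = t.2}

/-- A set of rooted triplets is compatible if one rooted tree displays all of them. -/
def RCompat {L : Type u} (S : Set L) (R : Set (Sym2 L × L)) : Prop :=
  ∃ T : RTree L S, ∀ t ∈ R, T.displays t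

/-- The graph `[R,S]`: vertices `S`, with an edge `{a,b}` whenever `ab|c ∈ R` for some `c ∈ S`. -/
def tripGraph {L : Type u} (R : Set (Sym2 L × L)) (S : Set L) : SimpleGraph L where
  Adj x y := x ≠ y ∧ x ∈ S ∧ y ∈ S ∧ ∃ c ∈ S, (s(x, y), c) ∈ R
  symm := by
    refine ⟨?_⟩
    rintro x y ⟨hxy, hx, hy, c, hc, hR⟩
    exact ⟨hxy.symm, hy, hx, c, hc, by rwa [Sym2.eq_swap]⟩
  loopless := by refine ⟨?_⟩; rintro x ⟨hx, -⟩; exact hx rfl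

/-- The label set `L_{s,t} = {a_1,…,a_s, b_1,…,b_t}`, with `a_i = inl i` and `b_j = inr j`. -/
def Lst (s t : ℕ) : Set (ℕ ⊕ ℕ) := (Sum.inl '' Set.Icc 1 s) ∪ (Sum.inr '' Set.Icc 1 t)

/-- The quartet set `Q_{s,t} = {a_1b_1|a_sb_t} ∪ {a_i a_{i+1} | b_j b_{j+1} : 1 ≤ i < s, 1 ≤ j < t}`. -/
def Qst (s t : ℕ) : Finset (Sym2 (Sym2 (ℕ ⊕ ℕ))) :=
  insert (quartet (Sum.inl 1) (Sum.inr 1) (Sum.inl s) (Sum.inr t))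
    ((Finset.Ico 1 s ×ˢ Finset.Ico 1 t).image
      (fun p => quartet (Sum.inl p.1) (Sum.inl (p.1 + 1)) (Sum.inr p.2) (Sum.inr (p.2 + 1))))

/-!
Take `R = {12|n} ∪ {i(i+1)|1 : 2 ≤ i < n}`. In a tree displaying `i(i+1)|1`, the labels `i`
and `i+1` meet `1` at the same vertex, so all of `2, …, n` meet `1` at one vertex and
`lca(1,2) = lca(1,2,n)`, contradicting `12|n`.

Removing `j(j+1)|1` (or `12|n`, with `j = n`) the tree `((1, (2 … j)), (j+1 … n))` displays the
rest. It is the tree of the hierarchy of clusters `{≤ j}`, `{2 … j}`, `{> j}` and singletons,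
whose vertices are the clusters, each hanging below its least strict supercluster; such a tree
displays `ab|c` as soon as some cluster contains `a` and `b` but not `c`.
-/

section ParentMap

variable {V : Type*} {r : V} {par : V → V} {rank : V → ℕ}

theorem rank_iterate_le (hr : par r = r) (hrank : ∀ v, v ≠ r → rank (par v) < rank v)
    (k : ℕ) (v : V) : rank (par^[k] v) ≤ rank v := by
  induction k generalizing v with
  | zero => rfl
  | succ k ih =>
    rw [Function.iterate_succ_apply]
    by_cases hv : v = r
    · rw [hv, hr]
      exact ih r
    · exact (ih (par v)).trans (hrank v hv).le

namespace SimpleGraph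

def parentGraph (par : V → V) : SimpleGraph V where
  Adj u v := u ≠ v ∧ (par u = v ∨ par v = u)
  symm := ⟨fun _ _ h => ⟨h.1.symm, h.2.symm⟩⟩
  loopless := ⟨fun _ h => h.1 rfl⟩

theorem parentGraph_exists_isPath_support (hr : par r = r)
    (hrank : ∀ v, v ≠ r → rank (par v) < rank v) (v : V) :
    ∃ p : (parentGraph par).Walk r v, p.IsPath ∧ ∀ u, u ∈ p.support ↔ ∃ k, par^[k] v = u := by
  induction hv : rank v using Nat.strong_induction_on generalizing v with
  | _ n ih =>
  by_cases hvr : v = r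
  · subst hvr
    refine ⟨.nil, .nil, fun u => ?_⟩
    simp [Function.iterate_fixed hr, eq_comm]
  · obtain ⟨p, hp, hsupp⟩ := ih _ (hv ▸ hrank v hvr) (par v) rfl
    have hv_notMem : v ∉ p.support := by
      rw [hsupp]
      rintro ⟨k, hk⟩
      have hle := rank_iterate_le hr hrank k (par v)
      rw [hk] at hle
      exact absurd hle (not_le.2 (hrank v hvr))
    have hadj : (parentGraph par).Adj (par v) v :=
      ⟨fun h => (hrank v hvr).ne (congrArg rank h), Or.inr rfl⟩
    refine ⟨p.concat hadj, hp.concat hv_notMem hadj, fun u => ?_⟩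
    rw [Walk.support_concat, List.mem_append, List.mem_singleton, hsupp]
    constructor
    · rintro (⟨k, rfl⟩ | rfl)
      · exact ⟨k + 1, Function.iterate_succ_apply par k v⟩
      · exact ⟨0, rfl⟩
    · rintro ⟨_ | k, rfl⟩
      · exact Or.inr rfl
      · exact Or.inl ⟨k, (Function.iterate_succ_apply par k v).symm⟩

theorem parentGraph_isAcyclic (hr : par r = r) (hrank : ∀ v, v ≠ r → rank (par v) < rank v) :
    (parentGraph par).IsAcyclic := by
  classical
  intro v₀ c hc
  obtain ⟨v, hv, hmax⟩ := c.support.toFinset.exists_max_image rank ⟨v₀, by simp⟩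
  rw [List.mem_toFinset] at hv
  have hc' := hc.rotate hv
  -- a vertex of maximal rank on a cycle can only be adjacent to its parent there
  have to_parent : ∀ w ∈ (c.rotate v hv).support, (parentGraph par).Adj v w → w = par v := by
    rintro w hw ⟨hne, h | h⟩
    · exact h.symm
    · have hwr : w ≠ r := by
        rintro rfl
        exact hne (h.symm.trans hr)
      have hlt := hrank w hwr
      rw [h] at hlt
      exact absurd (hmax w (by simpa [c.mem_support_rotate_iff] using hw)) (not_le.2 hlt)
  exact hc'.snd_ne_penultimate
    ((to_parent _ (Walk.getVert_mem_support _ _) (Walk.adj_snd hc'.not_nil)).trans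
      (to_parent _ (Walk.getVert_mem_support _ _) (Walk.adj_penultimate hc'.not_nil).symm).symm)

theorem parentGraph_isTree (hr : par r = r) (hrank : ∀ v, v ≠ r → rank (par v) < rank v) :
    (parentGraph par).IsTree := by
  have : Nonempty V := ⟨r⟩
  have reach (v : V) : (parentGraph par).Reachable r v :=
    ⟨(parentGraph_exists_isPath_support hr hrank v).choose⟩
  exact ⟨⟨fun u v => (reach u).symm.trans (reach v)⟩, parentGraph_isAcyclic hr hrank⟩

theorem parentGraph_mem_support_iff (hr : par r = r)
    (hrank : ∀ v, v ≠ r → rank (par v) < rank v) {u v : V} {p : (parentGraph par).Walk r v}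
    (hp : p.IsPath) : u ∈ p.support ↔ ∃ k, par^[k] v = u := by
  obtain ⟨q, hq, hsupp⟩ := parentGraph_exists_isPath_support hr hrank v
  rw [((parentGraph_isTree hr hrank).existsUnique_path r v).unique hp hq, hsupp]

end SimpleGraph

end ParentMap

namespace RTree

variable {L : Type u} {S : Set L} (T : RTree L S)

noncomputable def rootPath (v : T.V) : T.G.Walk T.root v :=
  (T.isTree.existsUnique_path T.root v).choose

theorem isPath_rootPath (v : T.V) : (T.rootPath v).IsPath :=
  (T.isTree.existsUnique_path T.root v).choose_spec.1

theorem eq_rootPath {v : T.V} {p : T.G.Walk T.root v} (hp : p.IsPath) : p = T.rootPath v :=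
  (T.isTree.existsUnique_path T.root v).choose_spec.2 p hp

theorem anc_iff_prefix {u v : T.V} :
    T.anc u v ↔ (T.rootPath u).support <+: (T.rootPath v).support := by
  classical
  constructor
  · rintro ⟨p, hp, hu⟩
    rw [T.eq_rootPath hp] at hu
    rw [← T.eq_rootPath ((T.isPath_rootPath v).takeUntil hu)]
    exact Walk.support_takeUntil_prefix_support _ hu
  · exact fun h => ⟨_, T.isPath_rootPath v, h.subset (Walk.end_mem_support _)⟩

theorem anc_trans {u v w : T.V} (huv : T.anc u v) (hvw : T.anc v w) : T.anc u w :=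
  T.anc_iff_prefix.2 ((T.anc_iff_prefix.1 huv).trans (T.anc_iff_prefix.1 hvw))

theorem anc_antisymm {u v : T.V} (huv : T.anc u v) (hvu : T.anc v u) : u = v := by
  have h := List.IsPrefix.eq_of_length (T.anc_iff_prefix.1 huv)
    ((T.anc_iff_prefix.1 huv).length_le.antisymm (T.anc_iff_prefix.1 hvu).length_le)
  rw [← Walk.getLast_support (T.rootPath u), ← Walk.getLast_support (T.rootPath v)]
  simp only [h]

theorem anc_total {u v w : T.V} (hu : T.anc u w) (hv : T.anc v w) : T.anc u v ∨ T.anc v u := by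
  simp only [anc_iff_prefix] at *
  exact List.prefix_or_prefix_of_prefix hu hv

theorem isMRCA_unique {A : Set T.V} {m m' : T.V} (h : T.isMRCA A m) (h' : T.isMRCA A m') :
    m = m' :=
  T.anc_antisymm (h'.2 m h.1) (h.2 m' h'.1)

/-- These are the hypotheses of `displays3`: then `vc` meets `va` and `vb` at one vertex. -/
theorem isMRCA_pair_of_isMRCA_triple {va vb vc m M : T.V}
    (hm : T.isMRCA {va, vb} m) (hM : T.isMRCA {va, vb, vc} M)
    (hMm : T.anc M m) (hne : M ≠ m) :
    T.isMRCA {va, vc} M ∧ T.isMRCA {vb, vc} M := by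
  have hma : T.anc m va := hm.1 va (by simp)
  have hmb : T.anc m vb := hm.1 vb (by simp)
  -- an ancestor of `vc` and of `va` or `vb` is comparable with `m`, and cannot lie below it
  have key : ∀ w, T.anc w vc → T.anc w va ∨ T.anc w vb → T.anc w M := by
    intro w hwc hw
    rcases hw.elim (T.anc_total · hma) (T.anc_total · hmb) with hwm | hmw
    · exact hM.2 w (by rintro x (rfl | rfl | rfl) <;>
        first | exact T.anc_trans hwm ‹_› | exact hwc)
    · refine absurd (T.anc_antisymm hMm (hM.2 m ?_)) hne
      rintro x (rfl | rfl | rfl) <;> first | assumption | exact T.anc_trans hmw hwc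
  refine ⟨⟨?_, fun w hw => key w (hw vc (by simp)) (.inl (hw va (by simp)))⟩,
    ⟨?_, fun w hw => key w (hw vc (by simp)) (.inr (hw vb (by simp)))⟩⟩ <;>
  · rintro x (rfl | rfl) <;> exact hM.1 _ (by simp)

end RTree

section Hierarchy

variable {L : Type}

def laminarClosure [DecidableEq L] (S : Finset L) (F : Finset (Finset L)) :
    Finset (Finset L) :=
  (insert S F ∪ S.image singleton).filter Finset.Nonempty

theorem mem_laminarClosure_of_mem [DecidableEq L] {S C : Finset L} {F : Finset (Finset L)}
    (hC : C ∈ F) (hne : C.Nonempty) : C ∈ laminarClosure S F :=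
  Finset.mem_filter.2 ⟨Finset.mem_union_left _ (Finset.mem_insert_of_mem hC), hne⟩

structure IsHierarchy (S : Finset L) (H : Finset (Finset L)) : Prop where
  top_mem : S ∈ H
  singleton_mem : ∀ x ∈ S, {x} ∈ H
  nonempty : ∀ C ∈ H, C.Nonempty
  subset : ∀ C ∈ H, C ⊆ S
  nested : ∀ C ∈ H, ∀ D ∈ H, C ⊆ D ∨ D ⊆ C ∨ Disjoint C D

namespace IsHierarchy

variable {S : Finset L} {H : Finset (Finset L)}

/-- Clusters sharing a point form a chain, so a smallest one satisfying `P` is least. -/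
theorem exists_least (hH : IsHierarchy S H) (P : Finset L → Prop) {x : L}
    (hx : ∀ D ∈ H, P D → x ∈ D) (hP : ∃ D ∈ H, P D) : ∃ D ∈ H, P D ∧ ∀ E ∈ H, P E → D ⊆ E := by
  classical
  obtain ⟨D, hD, hmin⟩ := (H.filter P).exists_min_image Finset.card
    (by simpa [Finset.filter_nonempty_iff] using hP)
  rw [Finset.mem_filter] at hD
  refine ⟨D, hD.1, hD.2, fun E hE hPE => ?_⟩
  rcases hH.nested D hD.1 E hE with hDE | hED | hdisj
  · exact hDE
  · exact (Finset.eq_of_subset_of_card_le hED (hmin E (Finset.mem_filter.2 ⟨hE, hPE⟩))).ge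
  · exact absurd (hx E hE hPE) (Finset.disjoint_left.1 hdisj (hx D hD.1 hD.2))

theorem exists_least_superset (hH : IsHierarchy S H) {X : Finset L} (hX : X.Nonempty)
    (hXS : X ⊆ S) :
    ∃ D ∈ H, X ⊆ D ∧ ∀ E ∈ H, X ⊆ E → D ⊆ E :=
  hH.exists_least (X ⊆ ·) (fun _ _ h => h hX.choose_spec) ⟨S, hH.top_mem, hXS⟩

theorem exists_least_ssuperset (hH : IsHierarchy S H) {C : Finset L} (hC : C ∈ H)
    (hCS : C ≠ S) :
    ∃ D ∈ H, C ⊂ D ∧ ∀ E ∈ H, C ⊂ E → D ⊆ E :=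
  hH.exists_least (C ⊂ ·) (fun _ _ h => h.subset (hH.nonempty C hC).choose_spec)
    ⟨S, hH.top_mem, (hH.subset C hC).ssubset_of_ne hCS⟩

open Classical in
noncomputable def parent (hH : IsHierarchy S H) (C : H) : H :=
  if hC : (C : Finset L) = S then C
  else ⟨_, (hH.exists_least_ssuperset C.2 hC).choose_spec.1⟩

theorem parent_of_eq (hH : IsHierarchy S H) {C : H} (hC : (C : Finset L) = S) :
    hH.parent C = C := by
  rw [parent, dif_pos hC]

theorem ssubset_parent (hH : IsHierarchy S H) {C : H} (hC : (C : Finset L) ≠ S) :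
    (C : Finset L) ⊂ hH.parent C := by
  rw [parent, dif_neg hC]
  exact (hH.exists_least_ssuperset C.2 hC).choose_spec.2.1

theorem parent_subset (hH : IsHierarchy S H) {C : H} (hC : (C : Finset L) ≠ S) {E : Finset L}
    (hE : E ∈ H) (hCE : (C : Finset L) ⊂ E) : (hH.parent C : Finset L) ⊆ E := by
  rw [parent, dif_neg hC]
  exact (hH.exists_least_ssuperset C.2 hC).choose_spec.2.2 E hE hCE

theorem subset_parent (hH : IsHierarchy S H) (C : H) : (C : Finset L) ⊆ hH.parent C := by
  by_cases hC : (C : Finset L) = S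
  · rw [hH.parent_of_eq hC]
  · exact (hH.ssubset_parent hC).subset

theorem rank_parent_lt (hH : IsHierarchy S H) (C : H) (hC : C ≠ ⟨S, hH.top_mem⟩) :
    S.card - (hH.parent C : Finset L).card < S.card - (C : Finset L).card := by
  have hC' : (C : Finset L) ≠ S := fun h => hC (Subtype.ext h)
  have := Finset.card_lt_card (hH.ssubset_parent hC')
  have := Finset.card_le_card (hH.subset _ (hH.parent C).2)
  omega

theorem exists_iterate_parent_iff (hH : IsHierarchy S H) (C D : H) :
    (∃ k, hH.parent^[k] D = C) ↔ (D : Finset L) ⊆ C := by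
  constructor
  · rintro ⟨k, rfl⟩
    induction k with
    | zero => exact subset_rfl
    | succ k ih =>
      rw [Function.iterate_succ_apply']
      exact ih.trans (hH.subset_parent _)
  · intro hDC
    induction hd : S.card - (D : Finset L).card using Nat.strong_induction_on
      generalizing D with
    | _ n ih =>
    by_cases hCD : D = C
    · exact ⟨0, hCD⟩
    · have hD : (D : Finset L) ≠ S := fun h =>
        hCD (Subtype.ext (hDC.antisymm (h ▸ hH.subset _ C.2)))
      have hDC' : (D : Finset L) ⊂ C := hDC.ssubset_of_ne (fun h => hCD (Subtype.ext h))
      obtain ⟨k, hk⟩ := ih _ (hd ▸ hH.rank_parent_lt D (fun h => hD (congrArg Subtype.val h)))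
        (hH.parent D) (hH.parent_subset hD C.2 hDC') rfl
      exact ⟨k + 1, hk⟩

theorem ssubset_of_parent_eq (hH : IsHierarchy S H) {C D : H} (hDC : hH.parent D = C)
    (hne : D ≠ C) : (D : Finset L) ⊂ C := by
  have hDS : (D : Finset L) ≠ S := fun h => hne (by rw [← hDC, hH.parent_of_eq h])
  exact hDC ▸ hH.ssubset_parent hDS

theorem exists_child (hH : IsHierarchy S H) {C : H} {x : L} (hx : x ∈ (C : Finset L))
    (hCx : (C : Finset L) ≠ {x}) : ∃ D : H, hH.parent D = C ∧ D ≠ C ∧ x ∈ (D : Finset L) := by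
  classical
  let X : H := ⟨{x}, hH.singleton_mem x (hH.subset _ C.2 hx)⟩
  have hex : ∃ k, hH.parent^[k] X = C :=
    (hH.exists_iterate_parent_iff C X).2 (Finset.singleton_subset_iff.2 hx)
  have hk0 : Nat.find hex ≠ 0 := by
    intro h
    have := Nat.find_spec hex
    rw [h] at this
    exact hCx (congrArg Subtype.val this).symm
  obtain ⟨k, hk⟩ := Nat.exists_eq_succ_of_ne_zero hk0
  refine ⟨hH.parent^[k] X, ?_, Nat.find_min hex (by rw [hk]; exact k.lt_succ_self), ?_⟩
  · rw [← Function.iterate_succ_apply' hH.parent k X, ← hk]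
    exact Nat.find_spec hex
  · exact (hH.exists_iterate_parent_iff _ X).1 ⟨k, rfl⟩ (Finset.mem_singleton_self x)

theorem neighborSet_eq_singleton (hH : IsHierarchy S H) {C : H} {x : L}
    (hCx : (C : Finset L) = {x}) (hCS : (C : Finset L) ≠ S) :
    (parentGraph hH.parent).neighborSet C = {hH.parent C} := by
  ext D
  simp only [mem_neighborSet, Set.mem_singleton_iff]
  constructor
  · rintro ⟨hne, h | h⟩
    · exact h.symm
    · have := hH.ssubset_of_parent_eq h hne.symm
      rw [hCx, Finset.ssubset_singleton_iff] at this
      exact absurd this (hH.nonempty _ D.2).ne_empty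
  · rintro rfl
    exact ⟨fun h => (hH.ssubset_parent hCS).ne (congrArg Subtype.val h), Or.inl rfl⟩

theorem three_le_ncard_neighborSet (hH : IsHierarchy S H) {C : H} (hCS : (C : Finset L) ≠ S)
    (hC : ∀ x, (C : Finset L) ≠ {x}) :
    3 ≤ ((parentGraph hH.parent).neighborSet C).ncard := by
  obtain ⟨x, hx⟩ := hH.nonempty _ C.2
  obtain ⟨D, hDC, hDne, hxD⟩ := hH.exists_child hx (hC x)
  have hDC' := hH.ssubset_of_parent_eq hDC hDne
  obtain ⟨y, hyC, hyD⟩ := Finset.exists_of_ssubset hDC'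
  obtain ⟨E, hEC, hEne, hyE⟩ := hH.exists_child hyC (hC y)
  have hEC' := hH.ssubset_of_parent_eq hEC hEne
  have hCP := hH.ssubset_parent hCS
  have hnbrs : {hH.parent C, D, E} ⊆ (parentGraph hH.parent).neighborSet C := by
    rintro F (rfl | rfl | rfl)
    · exact ⟨fun h => hCP.ne (congrArg Subtype.val h), Or.inl rfl⟩
    · exact ⟨hDne.symm, Or.inr hDC⟩
    · exact ⟨hEne.symm, Or.inr hEC⟩
  have hPD : hH.parent C ≠ D := fun h => (hDC'.trans hCP).ne (congrArg Subtype.val h).symm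
  have hPE : hH.parent C ≠ E := fun h => (hEC'.trans hCP).ne (congrArg Subtype.val h).symm
  have hDE : D ≠ E := fun h => hyD (h ▸ hyE)
  calc 3 = ({hH.parent C, D, E} : Set H).ncard :=
        (Set.ncard_eq_three.2 ⟨_, _, _, hPD, hPE, hDE, rfl⟩).symm
    _ ≤ _ := Set.ncard_le_ncard hnbrs (Set.toFinite _)

theorem parentGraph_isTree (hH : IsHierarchy S H) : (parentGraph hH.parent).IsTree :=
  SimpleGraph.parentGraph_isTree (hH.parent_of_eq rfl)
    (rank := fun C : H => S.card - (C : Finset L).card) hH.rank_parent_lt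

theorem exists_isPath_mem_support_iff (hH : IsHierarchy S H) (C D : H) :
    (∃ p : (parentGraph hH.parent).Walk ⟨S, hH.top_mem⟩ D, p.IsPath ∧ C ∈ p.support) ↔
      ∃ k, hH.parent^[k] D = C := by
  constructor
  · rintro ⟨p, hp, hC⟩
    exact (parentGraph_mem_support_iff (hH.parent_of_eq rfl)
      (rank := fun C : H => S.card - (C : Finset L).card) hH.rank_parent_lt hp).1 hC
  · intro h
    obtain ⟨p, hp, hsupp⟩ := parentGraph_exists_isPath_support (hH.parent_of_eq rfl)
      (rank := fun C : H => S.card - (C : Finset L).card) hH.rank_parent_lt D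
    exact ⟨p, hp, (hsupp C).2 h⟩

@[reducible] noncomputable def toRTree (hH : IsHierarchy S H) (hS : S.Nontrivial) : RTree L S where
  V := H
  fV := inferInstance
  G := parentGraph hH.parent
  isTree := hH.parentGraph_isTree
  root := ⟨S, hH.top_mem⟩
  label x := ⟨{x.1}, hH.singleton_mem x x.2⟩
  labelInj x y h := Subtype.ext (Finset.singleton_injective (congrArg Subtype.val h))
  leafIff C := by
    constructor
    · rintro ⟨x, rfl⟩
      have hxS : ({x.1} : Finset L) ≠ S := fun h => hS.ne_singleton h.symm
      exact ⟨by rw [hH.neighborSet_eq_singleton rfl hxS, Set.ncard_singleton],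
        fun h => hxS (congrArg Subtype.val h)⟩
    · rintro ⟨h1, hroot⟩
      by_contra hlabel
      have hC : ∀ x, (C : Finset L) ≠ {x} := fun x hx =>
        hlabel ⟨⟨x, hH.subset _ C.2 (hx ▸ Finset.mem_singleton_self x)⟩, Subtype.ext hx.symm⟩
      have := hH.three_le_ncard_neighborSet (fun h => hroot (Subtype.ext h)) hC
      omega
  noDeg2 C hroot := by
    have hCS : (C : Finset L) ≠ S := fun h => hroot (Subtype.ext h)
    by_cases hC : ∃ x, (C : Finset L) = {x}
    · obtain ⟨x, hx⟩ := hC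
      rw [hH.neighborSet_eq_singleton hx hCS, Set.ncard_singleton]
      omega
    · push Not at hC
      have := hH.three_le_ncard_neighborSet hCS hC
      omega

theorem toRTree_anc_iff (hH : IsHierarchy S H) (hS : S.Nontrivial) {C D : H} :
    (hH.toRTree hS).anc C D ↔ (D : Finset L) ⊆ C :=
  (hH.exists_isPath_mem_support_iff C D).trans (hH.exists_iterate_parent_iff C D)

theorem toRTree_isMRCA (hH : IsHierarchy S H) (hS : S.Nontrivial) {A : Set H} {m : H}
    (hA : ∀ C ∈ A, (C : Finset L) ⊆ m)
    (hm : ∀ D : H, (∀ C ∈ A, (C : Finset L) ⊆ D) → (m : Finset L) ⊆ D) :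
    (hH.toRTree hS).isMRCA A m := by
  simp only [RTree.isMRCA, toRTree_anc_iff]
  exact ⟨hA, hm⟩

theorem toRTree_displays3 (hH : IsHierarchy S H) (hS : S.Nontrivial) {a b c : L}
    {C : Finset L} (hC : C ∈ H) (ha : a ∈ C) (hb : b ∈ C) (hc : c ∈ S) (hcC : c ∉ C) :
    (hH.toRTree hS).displays3 a b c := by
  classical
  have haS := hH.subset C hC ha
  have hbS := hH.subset C hC hb
  obtain ⟨m, hm, habm, hmin⟩ := hH.exists_least_superset (X := {a, b}) (by simp)
    (by simp [Finset.insert_subset_iff, haS, hbS])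
  obtain ⟨M, hM, habcM, hMmin⟩ := hH.exists_least_superset (X := {a, b, c}) (by simp)
    (by simp [Finset.insert_subset_iff, haS, hbS, hc])
  simp only [Finset.insert_subset_iff, Finset.singleton_subset_iff] at habm habcM hmin hMmin
  refine ⟨haS, hbS, hc, ⟨m, hm⟩, ⟨M, hM⟩, ?_, ?_, ?_, ?_⟩
  · refine hH.toRTree_isMRCA hS ?_ fun D hD => ?_
    · rintro _ (rfl | rfl) <;> simp [habm]
    · exact hmin D D.2 ⟨by simpa using hD _ (.inl rfl), by simpa using hD _ (.inr rfl)⟩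
  · refine hH.toRTree_isMRCA hS ?_ fun D hD => ?_
    · rintro _ (rfl | rfl | rfl) <;> simp [habcM]
    · exact hMmin D D.2 ⟨by simpa using hD _ (.inl rfl), by simpa using hD _ (.inr (.inl rfl)),
        by simpa using hD _ (.inr (.inr rfl))⟩
  · exact (hH.toRTree_anc_iff hS).2 (hmin M hM ⟨habcM.1, habcM.2.1⟩)
  · intro h
    exact hcC (hmin C hC ⟨ha, hb⟩ (Subtype.mk.inj h ▸ habcM.2.2))

theorem toRTree_displays (hH : IsHierarchy S H) (hS : S.Nontrivial) {a b c : L}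
    {C : Finset L} (hC : C ∈ H) (ha : a ∈ C) (hb : b ∈ C) (hc : c ∈ S) (hcC : c ∉ C) :
    (hH.toRTree hS).displays (s(a, b), c) := by
  intro a' b' c' h
  simp only [Prod.mk.injEq, Sym2.eq_iff] at h
  obtain ⟨⟨rfl, rfl⟩ | ⟨rfl, rfl⟩, rfl⟩ := h
  · exact hH.toRTree_displays3 hS hC ha hb hc hcC
  · exact hH.toRTree_displays3 hS hC hb ha hc hcC

theorem of_laminarClosure [DecidableEq L] (hS : S.Nonempty) {F : Finset (Finset L)}
    (hFS : ∀ C ∈ F, C ⊆ S) (hF : ∀ C ∈ F, ∀ D ∈ F, C ⊆ D ∨ D ⊆ C ∨ Disjoint C D) :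
    IsHierarchy S (laminarClosure S F) := by
  have mem_cases {C : Finset L} (hC : C ∈ laminarClosure S F) :
      C = S ∨ C ∈ F ∨ ∃ x ∈ S, {x} = C := by
    simpa only [Finset.mem_union, Finset.mem_insert, Finset.mem_image, or_assoc]
      using (Finset.mem_filter.1 hC).1
  have subset {C : Finset L} (hC : C ∈ laminarClosure S F) : C ⊆ S := by
    rcases mem_cases hC with rfl | hCF | ⟨x, hx, rfl⟩
    exacts [subset_rfl, hFS C hCF, Finset.singleton_subset_iff.2 hx]
  have singleton_nested (x : L) (D : Finset L) : {x} ⊆ D ∨ Disjoint {x} D := by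
    by_cases hx : x ∈ D
    · exact .inl (Finset.singleton_subset_iff.2 hx)
    · exact .inr (Finset.disjoint_singleton_left.2 hx)
  refine ⟨?_, fun x hx => ?_, fun C hC => (Finset.mem_filter.1 hC).2, fun C hC => subset hC,
    fun C hC D hD => ?_⟩
  · simp [laminarClosure, hS]
  · simp only [laminarClosure, Finset.mem_filter, Finset.mem_union, Finset.mem_image]
    exact ⟨.inr ⟨x, hx, rfl⟩, Finset.singleton_nonempty x⟩
  · rcases mem_cases hC with rfl | hCF | ⟨x, -, rfl⟩
    · exact .inr (.inl (subset hD))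
    · rcases mem_cases hD with rfl | hDF | ⟨y, -, rfl⟩
      · exact .inl (hFS C hCF)
      · exact hF C hCF D hDF
      · rcases singleton_nested y C with h | h
        exacts [.inr (.inl h), .inr (.inr h.symm)]
    · rcases singleton_nested x D with h | h
      exacts [.inl h, .inr (.inr h)]

end IsHierarchy

end Hierarchy

theorem mem_tLabelSet_of_mem {L : Type u} {R : Set (Sym2 L × L)} {a b c : L}
    (h : (s(a, b), c) ∈ R) : a ∈ tLabelSet R ∧ b ∈ tLabelSet R ∧ c ∈ tLabelSet R :=
  ⟨⟨_, h, .inl (Sym2.mem_mk_left a b)⟩, ⟨_, h, .inl (Sym2.mem_mk_right a b)⟩, ⟨_, h, .inr rfl⟩⟩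

theorem tLabelSet_mono {L : Type u} {R R' : Set (Sym2 L × L)} (h : R ⊆ R') :
    tLabelSet R ⊆ tLabelSet R' := fun _ ⟨t, ht, hx⟩ => ⟨t, h ht, hx⟩

def RTree.trivial (L : Type) : RTree L ∅ where
  V := Unit
  fV := inferInstance
  G := ⊥
  isTree := .of_subsingleton
  root := ()
  label x := x.2.elim
  labelInj x := x.2.elim
  leafIff _ := iff_of_false (fun ⟨x, _⟩ => x.2.elim) fun h => h.2 rfl
  noDeg2 _ h := (h rfl).elim

theorem rCompat_empty {L : Type} : RCompat (tLabelSet (∅ : Set (Sym2 L × L))) ∅ := by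
  have hS : tLabelSet (∅ : Set (Sym2 L × L)) = ∅ := by simp [tLabelSet]
  exact hS ▸ ⟨RTree.trivial L, fun _ h => h.elim⟩

def linkTriplet (i : ℕ) : Sym2 ℕ × ℕ := (s(i, i + 1), 1)

def closingTriplet (n : ℕ) : Sym2 ℕ × ℕ := (s(1, 2), n)

def chainTriplets (n : ℕ) : Set (Sym2 ℕ × ℕ) :=
  insert (closingTriplet n) (linkTriplet '' Set.Ico 2 n)

section ChainTriplets

variable {n : ℕ}

theorem mem_chainTriplets {t : Sym2 ℕ × ℕ} :
    t ∈ chainTriplets n ↔ t = closingTriplet n ∨ ∃ i, 2 ≤ i ∧ i < n ∧ t = linkTriplet i := by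
  simp only [chainTriplets, Set.mem_insert_iff, Set.mem_image, Set.mem_Ico, and_assoc, eq_comm]

theorem linkTriplet_injective : Function.Injective linkTriplet := by
  intro i j h
  simp only [linkTriplet, Prod.mk.injEq, Sym2.eq_iff] at h
  omega

theorem closingTriplet_ne_linkTriplet (hn : n ≠ 1) (i : ℕ) : closingTriplet n ≠ linkTriplet i :=
  fun h => hn (congrArg Prod.snd h)

theorem isTriplet_of_mem_chainTriplets (hn : 3 ≤ n) {t : Sym2 ℕ × ℕ} (ht : t ∈ chainTriplets n) :
    IsTriplet t := by
  rcases mem_chainTriplets.1 ht with rfl | ⟨i, hi, -, rfl⟩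
  · exact ⟨1, 2, n, by omega, by omega, by omega, rfl⟩
  · exact ⟨i, i + 1, 1, by omega, by omega, by omega, rfl⟩

theorem tLabelSet_chainTriplets (hn : 3 ≤ n) : tLabelSet (chainTriplets n) = Set.Icc 1 n := by
  ext x
  constructor
  · rintro ⟨t, ht, hx⟩
    rcases mem_chainTriplets.1 ht with rfl | ⟨i, hi, hin, rfl⟩ <;>
    · simp only [closingTriplet, linkTriplet, Sym2.mem_iff] at hx
      simp only [Set.mem_Icc]
      omega
  · rintro ⟨h1, hxn⟩
    have mem_link (i : ℕ) (hi : 2 ≤ i) (hin : i < n) : linkTriplet i ∈ chainTriplets n :=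
      mem_chainTriplets.2 (.inr ⟨i, hi, hin, rfl⟩)
    obtain rfl | rfl | hx := (by omega : x = 1 ∨ x = n ∨ (2 ≤ x ∧ x < n))
    · exact (mem_tLabelSet_of_mem (mem_link 2 le_rfl (by omega))).2.2
    · exact (mem_tLabelSet_of_mem (mem_chainTriplets.2 (.inl rfl))).2.2
    · exact (mem_tLabelSet_of_mem (mem_link x hx.1 hx.2)).1

theorem ncard_tLabelSet_chainTriplets (hn : 3 ≤ n) : (tLabelSet (chainTriplets n)).ncard = n := by
  rw [tLabelSet_chainTriplets hn, ← Finset.coe_Icc, Set.ncard_coe_finset, Nat.card_Icc]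
  omega

theorem ncard_chainTriplets (hn : 3 ≤ n) : (chainTriplets n).ncard = n - 1 := by
  rw [chainTriplets, Set.ncard_insert_of_notMem, linkTriplet_injective.injOn.ncard_image,
    ← Finset.coe_Ico, Set.ncard_coe_finset, Nat.card_Ico]
  · omega
  · rintro ⟨i, -, h⟩
    exact closingTriplet_ne_linkTriplet (by omega) i h.symm

theorem RTree.not_forall_displays_chainTriplets (hn : 3 ≤ n) {S : Set ℕ} (T : RTree ℕ S) :
    ¬∀ t ∈ chainTriplets n, T.displays t := by
  intro hT
  have hlink (i : ℕ) (hi : 2 ≤ i) (hin : i < n) : T.displays3 i (i + 1) 1 :=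
    hT _ (mem_chainTriplets.2 (.inr ⟨i, hi, hin, rfl⟩)) _ _ _ rfl
  obtain ⟨h2, _, h1, m, M, hm, hM, hMm, hne⟩ := hlink 2 le_rfl (by omega)
  -- `i(i+1)|1` forces `i` and `i + 1` to meet `1` at the same vertex
  have hjoin (i : ℕ) (hi : 2 ≤ i) : i ≤ n → ∀ hiS : i ∈ S,
      T.isMRCA {T.label ⟨i, hiS⟩, T.label ⟨1, h1⟩} M := by
    induction i, hi using Nat.le_induction with
    | base => exact fun _ _ => (T.isMRCA_pair_of_isMRCA_triple hm hM hMm hne).1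
    | succ i hi ih =>
      intro hin _
      obtain ⟨hiS, _, _, m', M', hm', hM', hMm', hne'⟩ := hlink i hi (by omega)
      obtain ⟨hiM', hi1M'⟩ := T.isMRCA_pair_of_isMRCA_triple hm' hM' hMm' hne'
      exact T.isMRCA_unique hiM' (ih (by omega) hiS) ▸ hi1M'
  obtain ⟨_, _, hnS, m', M', hm', hM', hMm', hne'⟩ :=
    hT _ (mem_chainTriplets.2 (.inl rfl)) 1 2 n rfl
  have hm'M : m' = M := T.isMRCA_unique hm' (Set.pair_comm _ _ ▸ hjoin 2 le_rfl (by omega) h2)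
  have hM'M : M' = M := T.isMRCA_unique (T.isMRCA_pair_of_isMRCA_triple hm' hM' hMm' hne').1
    (Set.pair_comm _ _ ▸ hjoin n (by omega) le_rfl hnS)
  exact hne' (hM'M.trans hm'M.symm)

theorem exists_cut_of_ssubset (hn : 3 ≤ n) {R : Set (Sym2 ℕ × ℕ)} (hR : R ⊂ chainTriplets n) :
    ∃ j, 2 ≤ j ∧ linkTriplet j ∉ R ∧ (closingTriplet n ∈ R → j < n) := by
  obtain ⟨t, ht, htR⟩ := Set.exists_of_ssubset hR
  rcases mem_chainTriplets.1 ht with rfl | ⟨j, hj, hjn, rfl⟩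
  · refine ⟨n, by omega, fun h => ?_, fun h => absurd h htR⟩
    rcases mem_chainTriplets.1 (hR.subset h) with h' | ⟨i, -, hin, h'⟩
    · exact closingTriplet_ne_linkTriplet (by omega) n h'.symm
    · exact hin.ne (linkTriplet_injective h').symm
  · exact ⟨j, hj, htR, fun _ => hjn⟩

def cutClusters (S : Finset ℕ) (j : ℕ) : Finset (Finset ℕ) :=
  {S.filter (· ≤ j), S.filter (fun x => 2 ≤ x ∧ x ≤ j), S.filter (j < ·)}

theorem isHierarchy_cutClusters {S : Finset ℕ} (hS : S.Nonempty) (j : ℕ) :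
    IsHierarchy S (laminarClosure S (cutClusters S j)) := by
  refine IsHierarchy.of_laminarClosure hS ?_ ?_ <;>
    simp only [cutClusters, Finset.mem_insert, Finset.mem_singleton]
  · rintro C (rfl | rfl | rfl) <;> exact Finset.filter_subset _ _
  · rintro C (rfl | rfl | rfl) D (rfl | rfl | rfl) <;>
    first
    | exact .inl (Finset.monotone_filter_right _ fun x hx => by omega)
    | exact .inr (.inl (Finset.monotone_filter_right _ fun x hx => by omega))
    | exact .inr (.inr (Finset.disjoint_filter.2 fun x _ hx hx' => by omega))

/-- The tree `((1, (2 … j)), (j+1 … n))` on `S`. -/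
noncomputable abbrev cutTree {S : Finset ℕ} (hS : S.Nontrivial) (j : ℕ) : RTree ℕ S :=
  (isHierarchy_cutClusters hS.nonempty j).toRTree hS

section CutTree

variable {S : Finset ℕ} (hS : S.Nontrivial) {j : ℕ}

theorem cutTree_displays {a b c : ℕ} (p : ℕ → Prop) [DecidablePred p]
    (hp : S.filter p ∈ cutClusters S j) (ha : a ∈ S) (hb : b ∈ S) (hc : c ∈ S)
    (hpa : p a) (hpb : p b) (hpc : ¬p c) : (cutTree hS j).displays (s(a, b), c) :=
  (isHierarchy_cutClusters hS.nonempty j).toRTree_displays hS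
    (mem_laminarClosure_of_mem hp ⟨a, Finset.mem_filter.2 ⟨ha, hpa⟩⟩)
    (Finset.mem_filter.2 ⟨ha, hpa⟩) (Finset.mem_filter.2 ⟨hb, hpb⟩) hc
    fun h => hpc (Finset.mem_filter.1 h).2

theorem cutTree_displays_closingTriplet {n : ℕ} (hj : 2 ≤ j) (hjn : j < n) (h1 : 1 ∈ S)
    (h2 : 2 ∈ S) (hn : n ∈ S) : (cutTree hS j).displays (closingTriplet n) :=
  cutTree_displays hS (· ≤ j) (by simp [cutClusters]) h1 h2 hn (by omega) hj (by omega)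

theorem cutTree_displays_linkTriplet {i : ℕ} (hj : 2 ≤ j) (hi : 2 ≤ i) (hij : i ≠ j)
    (hiS : i ∈ S) (hi1S : i + 1 ∈ S) (h1 : 1 ∈ S) : (cutTree hS j).displays (linkTriplet i) := by
  rcases hij.lt_or_gt with hij | hij
  · exact cutTree_displays hS (fun x => 2 ≤ x ∧ x ≤ j) (by simp [cutClusters]) hiS hi1S h1
      ⟨hi, hij.le⟩ ⟨by omega, hij⟩ (by omega)
  · exact cutTree_displays hS (j < ·) (by simp [cutClusters]) hiS hi1S h1 hij (by omega)
      (by omega)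

end CutTree

theorem rCompat_of_cut (hn : 3 ≤ n) {R : Set (Sym2 ℕ × ℕ)} (hR : R ⊆ chainTriplets n)
    (hRne : R.Nonempty) {j : ℕ} (hj : 2 ≤ j) (hlink : linkTriplet j ∉ R)
    (hclosing : closingTriplet n ∈ R → j < n) : RCompat (tLabelSet R) R := by
  obtain ⟨S, hS⟩ : ∃ S : Finset ℕ, ↑S = tLabelSet R :=
    ((Set.finite_Icc 1 n).subset
      (tLabelSet_chainTriplets hn ▸ tLabelSet_mono hR)).exists_finset_coe
  have hlabels {a b c : ℕ} (h : (s(a, b), c) ∈ R) : a ∈ S ∧ b ∈ S ∧ c ∈ S := by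
    simpa only [← hS, Finset.mem_coe] using mem_tLabelSet_of_mem h
  have hSnt : S.Nontrivial := by
    obtain ⟨t, ht⟩ := hRne
    obtain ⟨a, b, c, hab, -, -, rfl⟩ := isTriplet_of_mem_chainTriplets hn (hR ht)
    exact ⟨a, (hlabels ht).1, b, (hlabels ht).2.1, hab⟩
  rw [← hS]
  refine ⟨cutTree hSnt j, fun t ht => ?_⟩
  rcases mem_chainTriplets.1 (hR ht) with rfl | ⟨i, hi, -, rfl⟩
  · obtain ⟨h1, h2, hnS⟩ := hlabels ht
    exact cutTree_displays_closingTriplet hSnt hj (hclosing ht) h1 h2 hnS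
  · obtain ⟨hiS, hi1S, h1⟩ := hlabels ht
    exact cutTree_displays_linkTriplet hSnt hj hi (fun h => hlink (h ▸ ht)) hiS hi1S h1

theorem rCompat_of_ssubset (hn : 3 ≤ n) {R : Set (Sym2 ℕ × ℕ)} (hR : R ⊂ chainTriplets n) :
    RCompat (tLabelSet R) R := by
  rcases R.eq_empty_or_nonempty with rfl | hRne
  · exact rCompat_empty
  · obtain ⟨j, hj, hlink, hclosing⟩ := exists_cut_of_ssubset hn hR
    exact rCompat_of_cut hn hR.subset hRne hj hlink hclosing

end ChainTriplets

/-- for every n ≥ 3 there is an incompatible set of n-1 rooted triplets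
over n labels, every proper subset of which is compatible. -/
theorem exists_minimal_incompatible_triplets (n : ℕ) (hn : 3 ≤ n) :
    ∃ R : Set (Sym2 ℕ × ℕ),
      (∀ t ∈ R, IsTriplet t) ∧
      (tLabelSet R).ncard = n ∧
      R.ncard = n - 1 ∧
      ¬ RCompat (tLabelSet R) R ∧
      (∀ R', R' ⊂ R → RCompat (tLabelSet R') R') :=
  ⟨chainTriplets n, fun _ => isTriplet_of_mem_chainTriplets hn, ncard_tLabelSet_chainTriplets hn,
    ncard_chainTriplets hn, fun ⟨T, hT⟩ => T.not_forall_displays_chainTriplets hn hT,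
    fun _ => rCompat_of_ssubset hn⟩
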